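/- arXiv:1803.05621 — 6 statements merged into one kernel-verified Lean document; each statement's English description precedes it below -/
import Mathlib

section
/- One-dimensional quadratic case: let φ_k(w) = (1/2)m_k w² + b_k w + c_k with m_k > 0, F(w) = (1/2)m w² + b w + c with m = (1/p)∑m_k, b = (1/p)∑b_k, c = (1/p)∑c_k, R(w) = |w|, P = F + R with minimizer w*. Define P_k(w;a) = (1/2)m_k w² + ((m-m_k)a + b)w + c_k + |w|. Then for all a ∈ ℝ, P(w*) - (1/p)∑_{k=1}^p min_w P_k(w;a) ≤ γ (a - w*)², where γ = (1/p)∑_{k=1}^p (m - m_k)²/m_k. -/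
/-!
Since `w*` minimizes the sum of the smooth quadratic `F` and the convex `|·|`, it satisfies the
first-order condition `(m w* + b)(w - w*) + |w| - |w*| ≥ 0` for every `w`. Substituting it into
`P_k(w*; a) - P_k(w; a)` cancels the nonsmooth part and leaves
`(m - m_k)(w* - a)(w - w*) - (m_k / 2)(w - w*)²`, which is at most `(m - m_k)²(a - w*)² / m_k`
by completing the square. Averaging over `k`, the shifts `(m - m_k) a` cancel, so the local
objectives at `w*` average to `P(w*)`.
-/

open Set

theorem IsMinOn.hasFDerivAt_add_convexOn_nonneg {E : Type*} [NormedAddCommGroup E]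
    [NormedSpace ℝ E] {f g : E → ℝ} {f' : StrongDual ℝ E} {x : E}
    (hmin : IsMinOn (f + g) univ x) (hf : HasFDerivAt f f' x) (hg : ConvexOn ℝ univ g)
    (y : E) : 0 ≤ f' (y - x) + (g y - g x) := by
  -- By convexity of `g`, `φ t ≥ (f + g) (x + t • (y - x)) - g x ≥ φ 0` on `[0, 1]`.
  set φ : ℝ → ℝ := fun t => f (x + t • (y - x)) + t * (g y - g x)
  have hφmin : IsMinOn φ (Icc 0 1) 0 := by
    intro t ⟨ht0, ht1⟩
    have hconv : g (x + t • (y - x)) ≤ (1 - t) * g x + t * g y := by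
      have hpt : x + t • (y - x) = (1 - t) • x + t • y := by
        rw [smul_sub, sub_smul, one_smul]; abel
      rw [hpt]
      exact hg.2 (mem_univ x) (mem_univ y) (sub_nonneg.2 ht1) ht0 (by ring)
    have hx := hmin (mem_univ (x + t • (y - x)))
    simp only [Pi.add_apply, mem_ofPred_eq] at hx
    show φ 0 ≤ φ t
    simp only [φ, zero_smul, add_zero, zero_mul]
    linarith
  have hφ : HasDerivAt φ (f' (y - x) + (g y - g x)) 0 := by
    have hline : HasDerivAt (fun t : ℝ => x + t • (y - x)) (y - x) 0 := by
      simpa using ((hasDerivAt_id (0 : ℝ)).smul_const (y - x)).const_add x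
    have hfline : HasDerivAt (fun t : ℝ => f (x + t • (y - x))) (f' (y - x)) 0 :=
      (by simpa using hf : HasFDerivAt f f' (x + (0 : ℝ) • (y - x))).comp_hasDerivAt 0 hline
    have hsum := hfline.fun_add ((hasDerivAt_id' (0 : ℝ)).mul_const (g y - g x))
    rwa [one_mul] at hsum
  have hcone : (1 : ℝ) ∈ posTangentConeAt (Icc 0 1) 0 :=
    mem_posTangentConeAt_of_segment_subset (by simp [segment_eq_Icc])
  simpa using hφmin.localize.hasFDerivWithinAt_nonneg hφ.hasDerivWithinAt.hasFDerivWithinAt hcone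

/-- `P = quadAddAbs m b c` and `P_k(·; a) = quadAddAbs m_k ((m - m_k) a + b) c_k`. -/
noncomputable def quadAddAbs (μ β γ w : ℝ) : ℝ := 1 / 2 * μ * w ^ 2 + β * w + γ + |w|

theorem IsMinOn.quadAddAbs_subgradient {m b c w₀ : ℝ} (h : IsMinOn (quadAddAbs m b c) univ w₀)
    (w : ℝ) : 0 ≤ (m * w₀ + b) * (w - w₀) + (|w| - |w₀|) := by
  have hquad : HasDerivAt (fun w : ℝ => 1 / 2 * m * w ^ 2 + b * w + c) (m * w₀ + b) w₀ := by
    refine (((hasDerivAt_pow 2 w₀).const_mul (1 / 2 * m)).fun_add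
      ((hasDerivAt_id' w₀).const_mul b)).add_const c |>.congr_deriv ?_
    norm_num
    ring
  have habs : ConvexOn ℝ univ (fun w : ℝ => |w|) := convexOn_univ_norm
  simpa [mul_comm] using h.hasFDerivAt_add_convexOn_nonneg hquad.hasFDerivAt habs w

theorem quadAddAbs_sub_le_of_subgradient {M μ a b c w₀ w : ℝ} (hμ : 0 < μ)
    (hsub : 0 ≤ (M * w₀ + b) * (w - w₀) + (|w| - |w₀|)) :
    quadAddAbs μ ((M - μ) * a + b) c w₀ - quadAddAbs μ ((M - μ) * a + b) c w ≤
      (M - μ) ^ 2 / μ * (a - w₀) ^ 2 := by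
  rw [div_mul_eq_mul_div, le_div_iff₀ hμ]
  unfold quadAddAbs
  nlinarith [sq_nonneg (μ * (w - w₀) + (M - μ) * (a - w₀))]

theorem sum_quadAddAbs_shifted {ι : Type*} [Fintype ι] {mk ck : ι → ℝ} {m c : ℝ}
    (hm : ∑ k, mk k = Fintype.card ι * m) (hc : ∑ k, ck k = Fintype.card ι * c) (a b w : ℝ) :
    ∑ k, quadAddAbs (mk k) ((m - mk k) * a + b) (ck k) w = Fintype.card ι * quadAddAbs m b c w := by
  simp only [quadAddAbs, Finset.sum_add_distrib, ← Finset.sum_mul, ← Finset.mul_sum,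
    Finset.sum_sub_distrib, Finset.sum_const, Finset.card_univ, nsmul_eq_mul, hm, hc]
  ring

theorem local_global_gap_quadratic_1d_general
    (p : ℕ) (hp : 0 < p)
    (mk ck : Fin p → ℝ) (hmk : ∀ k, 0 < mk k)
    (m b c : ℝ)
    (hm : m = (1 / (p : ℝ)) * ∑ k, mk k)
    (hc : c = (1 / (p : ℝ)) * ∑ k, ck k)
    (wstar : ℝ)
    (hwstar : IsMinOn (fun w : ℝ => (1 / 2) * m * w ^ 2 + b * w + c + |w|) Set.univ wstar)
    (wk : Fin p → ℝ → ℝ)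
    (a : ℝ) :
    ((1 / 2) * m * wstar ^ 2 + b * wstar + c + |wstar|) -
      (1 / (p : ℝ)) * ∑ k,
        ((1 / 2) * mk k * (wk k a) ^ 2 + ((m - mk k) * a + b) * (wk k a) + ck k + |wk k a|)
    ≤ ((1 / (p : ℝ)) * ∑ k, (m - mk k) ^ 2 / mk k) * (a - wstar) ^ 2 := by
  have hp₀ : (p : ℝ) ≠ 0 := by positivity
  set P : Fin p → ℝ → ℝ := fun k => quadAddAbs (mk k) ((m - mk k) * a + b) (ck k)
  have hsum : ∑ k, P k wstar = p * quadAddAbs m b c wstar := by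
    simpa using sum_quadAddAbs_shifted (mk := mk) (ck := ck)
      (by rw [Fintype.card_fin, hm]; field_simp) (by rw [Fintype.card_fin, hc]; field_simp)
      a b wstar
  have hsub := IsMinOn.quadAddAbs_subgradient (c := c) hwstar
  change quadAddAbs m b c wstar - 1 / (p : ℝ) * ∑ k, P k (wk k a) ≤ _
  calc _ = 1 / (p : ℝ) * ∑ k, (P k wstar - P k (wk k a)) := by
        rw [Finset.sum_sub_distrib, hsum, mul_sub, ← mul_assoc, one_div_mul_cancel hp₀, one_mul]
    _ ≤ 1 / (p : ℝ) * ∑ k, (m - mk k) ^ 2 / mk k * (a - wstar) ^ 2 := by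
        gcongr with k
        exact quadAddAbs_sub_le_of_subgradient (hmk k) (hsub _)
    _ = _ := by rw [← Finset.sum_mul, mul_assoc]

/-- One-dimensional quadratic case of the local-global gap bound (Lemma 4):
`P(w*) - (1/p)∑ₖ min_w P_k(w;a) ≤ γ (a - w*)²` with `γ = (1/p)∑ₖ (m - mₖ)²/mₖ`. -/
theorem local_global_gap_quadratic_1d
    (p : ℕ) (hp : 0 < p)
    (mk bk ck : Fin p → ℝ) (hmk : ∀ k, 0 < mk k)
    (m b c : ℝ)
    (hm : m = (1 / (p : ℝ)) * ∑ k, mk k)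
    (hb : b = (1 / (p : ℝ)) * ∑ k, bk k)
    (hc : c = (1 / (p : ℝ)) * ∑ k, ck k)
    (wstar : ℝ)
    (hwstar : IsMinOn (fun w : ℝ => (1 / 2) * m * w ^ 2 + b * w + c + |w|) Set.univ wstar)
    (wk : Fin p → ℝ → ℝ)
    (hwk : ∀ k a, IsMinOn (fun w : ℝ =>
      (1 / 2) * mk k * w ^ 2 + ((m - mk k) * a + b) * w + ck k + |w|) Set.univ (wk k a))
    (a : ℝ) :
    ((1 / 2) * m * wstar ^ 2 + b * wstar + c + |wstar|) -
      (1 / (p : ℝ)) * ∑ k,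
        ((1 / 2) * mk k * (wk k a) ^ 2 + ((m - mk k) * a + b) * (wk k a) + ck k + |wk k a|)
    ≤ ((1 / (p : ℝ)) * ∑ k, (m - mk k) ^ 2 / mk k) * (a - wstar) ^ 2 :=
  local_global_gap_quadratic_1d_general p hp mk ck hmk m b c hm hc wstar hwstar wk a
end

section
/- Diagonal quadratic case in ℝ^d: let φ_k(w) = (1/2)wᵀA_k w + b_kᵀw + c_k with A_k diagonal positive definite, F(w) = (1/2)wᵀA w + bᵀw + c their average (A = (1/p)∑A_k diagonal), R(w) = ‖w‖₁, P = F + R with minimizer w*, and P_k(w;a) = φ_k(w) + (∇F(a) - ∇φ_k(a))ᵀw + R(w). Then for all a, P(w*) - (1/p)∑_k min_w P_k(w;a) ≤ γ‖a - w*‖², where γ = max_{i=1,…,d} (1/p)∑_{k=1}^p (A(i,i) - A_k(i,i))²/A_k(i,i). -/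
/-!
Everything separates over coordinates, so fix one coordinate with `s = w*ᵢ`. Optimality of `s`
for `Ā/2 x² + bx + |x|` makes `-(Ā s + b)` a subgradient of `|·|` at `s`; replacing `|W|` in the
`k`-th local objective by this affine minorant leaves a one-dimensional quadratic in `W` whose
minimum is explicit. Averaging over `k`, the terms linear in `Ā - Aₖ` cancel because `Ā` is the
mean of the `Aₖ`, and what is left is `(1/p) ∑ₖ (Ā - Aₖ)² / (2Aₖ) · (aᵢ - s)²`.
-/

open Set Filter Topology Finset

theorem ConvexOn.sub_mul_le_of_isMinOn_add {q g : ℝ → ℝ} {q' s : ℝ} (hg : ConvexOn ℝ univ g)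
    (hq : HasDerivAt q q' s) (hmin : IsMinOn (fun x => q x + g x) univ s) (w : ℝ) :
    g s - q' * (w - s) ≤ g w := by
  have hline : HasDerivAt (fun t => q (s + t * (w - s))) (q' * (w - s)) 0 := by
    have hinner : HasDerivAt (fun t : ℝ => s + t * (w - s)) (w - s) 0 := by
      simpa using ((hasDerivAt_id (0 : ℝ)).mul_const (w - s)).const_add s
    exact (by simpa using hq : HasDerivAt q q' (s + 0 * (w - s))).comp 0 hinner
  -- convexity of `g` on the segment from `s` to `w` bounds `g s - g w` by difference quotients
  -- of `q`, whose limit is `q' * (w - s)`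
  have hslope : ∀ t ∈ Ioo (0 : ℝ) 1,
      g s - g w ≤ t⁻¹ • (q (s + (0 + t) * (w - s)) - q (s + 0 * (w - s))) := by
    rintro t ⟨ht0, ht1⟩
    have hconv : g (s + t * (w - s)) ≤ (1 - t) * g s + t * g w := by
      have := hg.2 (mem_univ s) (mem_univ w) (show 0 ≤ 1 - t by linarith) ht0.le (by ring)
      simpa only [smul_eq_mul, show (1 - t) * s + t * w = s + t * (w - s) by ring] using this
    have hle := (isMinOn_univ_iff.mp hmin) (s + t * (w - s))
    rw [smul_eq_mul, zero_add, zero_mul, add_zero, le_inv_mul_iff₀ ht0]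
    linarith
  have := ge_of_tendsto hline.tendsto_slope_zero_right
    (eventually_of_mem (Ioo_mem_nhdsGT one_pos) hslope)
  linarith

theorem IsMinOn.apply_of_add_sum {ι α M : Type*} [Fintype ι] [DecidableEq ι]
    [AddCommMonoid M] [LinearOrder M] [IsOrderedCancelAddMonoid M]
    {g : ι → α → M} {c : M} {w : ι → α}
    (h : IsMinOn (fun y => c + ∑ j, g j (y j)) univ w) (i : ι) : IsMinOn (g i) univ (w i) := by
  refine isMinOn_univ_iff.mpr fun x => ?_
  have hx := isMinOn_univ_iff.mp h (Function.update w i x)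
  have hrest : ∀ j ∈ ({i}ᶜ : Finset ι), g j (Function.update w i x j) = g j (w j) :=
    fun j hj => by rw [Function.update_of_ne (by simpa using hj)]
  rw [Fintype.sum_eq_add_sum_compl i, Fintype.sum_eq_add_sum_compl i, Function.update_self,
    sum_congr rfl hrest] at hx
  exact le_of_add_le_add_right (le_of_add_le_add_left hx)

theorem sum_sub_eq_zero_of_eq_average {ι : Type*} [Fintype ι] [Nonempty ι] {x : ℝ} {y : ι → ℝ}
    (hx : x = (1 / (Fintype.card ι : ℝ)) * ∑ j, y j) : ∑ k, (x - y k) = 0 := by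
  rw [sum_sub_distrib, sum_const, card_univ, nsmul_eq_mul, hx]
  field_simp
  ring

noncomputable def quadAbs (u β x : ℝ) : ℝ := u / 2 * x ^ 2 + β * x + |x|

theorem abs_sub_mul_le_of_isMinOn_quadAbs {u β s : ℝ} (hmin : IsMinOn (quadAbs u β) univ s)
    (w : ℝ) : |s| - (u * s + β) * (w - s) ≤ |w| := by
  have hq : HasDerivAt (fun x => u / 2 * x ^ 2 + β * x) (u * s + β) s :=
    (((hasDerivAt_pow 2 s).const_mul (u / 2)).add ((hasDerivAt_id' s).const_mul β)).congr_deriv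
      (by push_cast; ring)
  have habs : ConvexOn ℝ univ (fun x : ℝ => |x|) := convexOn_univ_norm (E := ℝ)
  exact habs.sub_mul_le_of_isMinOn_add hq hmin w

theorem quadAbs_sub_quadAbs_le {u β s v : ℝ} (hmin : IsMinOn (quadAbs u β) univ s) (hv : 0 < v)
    (a w : ℝ) :
    quadAbs u β s - quadAbs v (β + (u - v) * a) w
      ≤ (u - v) ^ 2 / (2 * v) * (a - s) ^ 2 - (u - v) * (a * s - s ^ 2 / 2) := by
  have hsub := abs_sub_mul_le_of_isMinOn_quadAbs hmin w
  have hsq : (u - v) ^ 2 / (2 * v) * (a - s) ^ 2 - (u - v) * (a * s - s ^ 2 / 2)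
      - (u / 2 * s ^ 2 - v / 2 * w ^ 2 - (u - v) * a * w + (u * s + β) * (w - s) + β * s - β * w)
      = (v * w - (u * s - (u - v) * a)) ^ 2 / (2 * v) := by
    field_simp
    ring
  have : 0 ≤ (v * w - (u * s - (u - v) * a)) ^ 2 / (2 * v) := by positivity
  unfold quadAbs
  linarith

theorem quadAbs_sub_average_le {ι : Type*} [Fintype ι] [Nonempty ι] {u β s : ℝ} {v : ι → ℝ}
    (hu : u = (1 / (Fintype.card ι : ℝ)) * ∑ k, v k) (hv : ∀ k, 0 < v k)
    (hmin : IsMinOn (quadAbs u β) univ s) (a : ℝ) (w : ι → ℝ) :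
    quadAbs u β s - (1 / (Fintype.card ι : ℝ)) * ∑ k, quadAbs (v k) (β + (u - v k) * a) (w k)
      ≤ ((1 / (Fintype.card ι : ℝ)) * ∑ k, (u - v k) ^ 2 / (2 * v k)) * (a - s) ^ 2 := by
  have hn : (Fintype.card ι : ℝ) ≠ 0 := by positivity
  calc quadAbs u β s - (1 / (Fintype.card ι : ℝ)) * ∑ k, quadAbs (v k) (β + (u - v k) * a) (w k)
      = (1 / (Fintype.card ι : ℝ)) *
          ∑ k, (quadAbs u β s - quadAbs (v k) (β + (u - v k) * a) (w k)) := by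
        rw [sum_sub_distrib, sum_const, card_univ, nsmul_eq_mul, mul_sub, ← mul_assoc,
          one_div_mul_cancel hn, one_mul]
    _ ≤ (1 / (Fintype.card ι : ℝ)) * ∑ k,
          ((u - v k) ^ 2 / (2 * v k) * (a - s) ^ 2 - (u - v k) * (a * s - s ^ 2 / 2)) := by
        gcongr _ * ∑ k, ?_ with k
        exact quadAbs_sub_quadAbs_le hmin (hv k) a (w k)
    _ = ((1 / (Fintype.card ι : ℝ)) * ∑ k, (u - v k) ^ 2 / (2 * v k)) * (a - s) ^ 2 := by
        rw [sum_sub_distrib, ← sum_mul, ← sum_mul, sum_sub_eq_zero_of_eq_average hu]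
        ring

/-- Diagonal matrices are represented by their diagonals `A k : Fin d → ℝ`. -/
theorem local_global_gap_quadratic_diag_general
    (d p : ℕ) (hp : 0 < p)
    (A : Fin p → Fin d → ℝ) (bk : Fin p → Fin d → ℝ) (ck : Fin p → ℝ)
    (hA : ∀ k i, 0 < A k i)
    (Abar : Fin d → ℝ) (b : Fin d → ℝ) (c : ℝ)
    (hAbar : ∀ i, Abar i = (1 / (p : ℝ)) * ∑ k, A k i)
    (hc : c = (1 / (p : ℝ)) * ∑ k, ck k)
    (φ : Fin p → (Fin d → ℝ) → ℝ)
    (hφ : ∀ k w, φ k w = (1 / 2) * ∑ i, A k i * w i ^ 2 + ∑ i, bk k i * w i + ck k)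
    (F R P : (Fin d → ℝ) → ℝ)
    (hF : ∀ w, F w = (1 / 2) * ∑ i, Abar i * w i ^ 2 + ∑ i, b i * w i + c)
    (hR : ∀ w, R w = ∑ i, |w i|)
    (hP : ∀ w, P w = F w + R w)
    (Pk : Fin p → (Fin d → ℝ) → (Fin d → ℝ) → ℝ)
    -- `Pk k w a = φ_k(w) + (∇F(a) - ∇φ_k(a))ᵀw + R(w)`
    (hPk : ∀ k w a, Pk k w a =
      φ k w + ∑ i, ((Abar i * a i + b i) - (A k i * a i + bk k i)) * w i + R w)
    (wstar : Fin d → ℝ) (hwstar : IsMinOn P Set.univ wstar)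
    (wk : Fin p → (Fin d → ℝ) → (Fin d → ℝ))
    (γ : ℝ)
    (hγ : γ = ⨆ i : Fin d, (1 / (p : ℝ)) * ∑ k, (Abar i - A k i) ^ 2 / A k i)
    (a : Fin d → ℝ) :
    P wstar - (1 / (p : ℝ)) * ∑ k, Pk k (wk k a) a
      ≤ γ * ∑ i, (a i - wstar i) ^ 2 := by
  have hPsep : ∀ w, P w = c + ∑ i, quadAbs (Abar i) (b i) (w i) := by
    intro w
    simp only [hP, hF, hR, quadAbs, sum_add_distrib, mul_sum]
    ring_nf
  have hPksep : ∀ k w, Pk k w a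
      = ck k + ∑ i, quadAbs (A k i) (b i + (Abar i - A k i) * a i) (w i) := by
    intro k w
    simp only [hPk, hφ, hR, quadAbs, add_mul, sub_mul, sum_add_distrib, sum_sub_distrib, mul_sum]
    ring_nf
  have hcoord : ∀ i, IsMinOn (quadAbs (Abar i) (b i)) univ (wstar i) :=
    (funext hPsep ▸ hwstar).apply_of_add_sum
  have hcoef : ∀ i, (1 / (p : ℝ)) * ∑ k, (Abar i - A k i) ^ 2 / (2 * A k i) ≤ γ := by
    intro i
    calc (1 / (p : ℝ)) * ∑ k, (Abar i - A k i) ^ 2 / (2 * A k i)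
        ≤ (1 / (p : ℝ)) * ∑ k, (Abar i - A k i) ^ 2 / A k i := by
          gcongr with k <;> linarith [hA k i]
      _ ≤ γ := by
          rw [hγ]
          exact le_ciSup (f := fun j => (1 / (p : ℝ)) * ∑ k, (Abar j - A k j) ^ 2 / A k j)
            (Finite.bddAbove_range _) i
  have := Fin.pos_iff_nonempty.mp hp
  calc P wstar - (1 / (p : ℝ)) * ∑ k, Pk k (wk k a) a
      = ∑ i, (quadAbs (Abar i) (b i) (wstar i) - (1 / (p : ℝ)) *
          ∑ k, quadAbs (A k i) (b i + (Abar i - A k i) * a i) (wk k a i)) := by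
        simp only [hPsep, hPksep, sum_add_distrib, mul_add, ← hc]
        rw [sum_comm, mul_sum, sum_sub_distrib]
        ring
    _ ≤ ∑ i, ((1 / (p : ℝ)) * ∑ k, (Abar i - A k i) ^ 2 / (2 * A k i)) * (a i - wstar i) ^ 2 := by
        gcongr with i
        simpa only [Fintype.card_fin] using quadAbs_sub_average_le
          (by rw [Fintype.card_fin]; exact hAbar i) (hA · i) (hcoord i) (a i) (wk · a i)
    _ ≤ γ * ∑ i, (a i - wstar i) ^ 2 := by
        rw [mul_sum]
        gcongr with i
        exact hcoef i

/-- Diagonal quadratic case in ℝ^d (Lemma 5): the local-global gap is bounded by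
`γ‖a - w*‖²` with `γ = maxᵢ (1/p)∑ₖ (A(i,i) - Aₖ(i,i))²/Aₖ(i,i)`.
Diagonal matrices are represented by their diagonals `A k : Fin d → ℝ`. -/
theorem local_global_gap_quadratic_diag
    (d p : ℕ) (hd : 0 < d) (hp : 0 < p)
    (A : Fin p → Fin d → ℝ) (bk : Fin p → Fin d → ℝ) (ck : Fin p → ℝ)
    (hA : ∀ k i, 0 < A k i)
    (Abar : Fin d → ℝ) (b : Fin d → ℝ) (c : ℝ)
    (hAbar : ∀ i, Abar i = (1 / (p : ℝ)) * ∑ k, A k i)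
    (hb : ∀ i, b i = (1 / (p : ℝ)) * ∑ k, bk k i)
    (hc : c = (1 / (p : ℝ)) * ∑ k, ck k)
    (φ : Fin p → (Fin d → ℝ) → ℝ)
    (hφ : ∀ k w, φ k w = (1 / 2) * ∑ i, A k i * w i ^ 2 + ∑ i, bk k i * w i + ck k)
    (F R P : (Fin d → ℝ) → ℝ)
    (hF : ∀ w, F w = (1 / 2) * ∑ i, Abar i * w i ^ 2 + ∑ i, b i * w i + c)
    (hR : ∀ w, R w = ∑ i, |w i|)
    (hP : ∀ w, P w = F w + R w)
    (Pk : Fin p → (Fin d → ℝ) → (Fin d → ℝ) → ℝ)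
    -- `Pk k w a = φ_k(w) + (∇F(a) - ∇φ_k(a))ᵀw + R(w)`
    (hPk : ∀ k w a, Pk k w a =
      φ k w + ∑ i, ((Abar i * a i + b i) - (A k i * a i + bk k i)) * w i + R w)
    (wstar : Fin d → ℝ) (hwstar : IsMinOn P Set.univ wstar)
    (wk : Fin p → (Fin d → ℝ) → (Fin d → ℝ))
    (hwk : ∀ k a, IsMinOn (fun w => Pk k w a) Set.univ (wk k a))
    (γ : ℝ)
    (hγ : γ = ⨆ i : Fin d, (1 / (p : ℝ)) * ∑ k, (Abar i - A k i) ^ 2 / A k i)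
    (a : Fin d → ℝ) :
    P wstar - (1 / (p : ℝ)) * ∑ k, Pk k (wk k a) a
      ≤ γ * ∑ i, (a i - wstar i) ^ 2 :=
  local_global_gap_quadratic_diag_general d p hp A bk ck hA Abar b c hAbar hc φ hφ F R P hF hR hP Pk
    hPk wstar hwstar wk γ hγ a
end

section
/- Smooth regularizer case: suppose R is convex and L'-smooth, F = (1/p)∑φ_k with each φ_k μ_k-strongly convex and L_k-smooth, F itself L-smooth, and w* = argmin(F+R). With w_k*(a) = argmin_w P_k(w;a) where P_k(w;a) = φ_k(w)+(∇F(a)-∇φ_k(a))ᵀw+R(w), one has ‖w* - w_k*(a)‖ ≤ ((L_k+L)/μ_k)‖a - w*‖ for all a. -/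
/-!
The gradient of the strongly convex function `φ_k + R` is `μ_k`-strongly monotone, hence
`μ_k ‖w* - w_k*(a)‖ ≤ ‖∇(φ_k + R)(w*) - ∇(φ_k + R)(w_k*(a))‖`. The two optimality conditions
turn this gradient difference into `(∇φ_k(w*) - ∇φ_k(a)) - (∇F(w*) - ∇F(a))`, which the
Lipschitz bounds on `∇φ_k` and `∇F` control by `(L_k + L) ‖a - w*‖`.
-/

open Set InnerProductSpace

section Convex

variable {E : Type*} [NormedAddCommGroup E] [NormedSpace ℝ E] {s : Set E} {f : E → ℝ}
  {f' : E →L[ℝ] ℝ} {x y : E}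

theorem ConvexOn.apply_sub_le_sub_of_hasFDerivAt (hf : ConvexOn ℝ s f) (hx : x ∈ s) (hy : y ∈ s)
    (hf' : HasFDerivAt f f' x) : f' (y - x) ≤ f y - f x := by
  let ℓ : ℝ →ᵃ[ℝ] E := AffineMap.lineMap x y
  have hderiv : HasDerivAt (f ∘ ℓ) (f' (y - x)) 0 :=
    hf'.comp_hasDerivAt_of_eq 0 AffineMap.hasDerivAt_lineMap (AffineMap.lineMap_apply_zero x y).symm
  have hconv : ConvexOn ℝ (ℓ ⁻¹' s) (f ∘ ℓ) := hf.comp_affineMap ℓ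
  have h01 := hconv.le_slope_of_hasDerivAt (by simpa [ℓ] using hx) (by simpa [ℓ] using hy)
    zero_lt_one hderiv
  simpa [ℓ, slope_def_field] using h01

end Convex

section Gradient

variable {E : Type*} [NormedAddCommGroup E] [InnerProductSpace ℝ E] [CompleteSpace E]
  {s : Set E} {f g : E → ℝ} {m : ℝ} {x y f'x f'y g' : E}

theorem HasGradientAt.add (hf : HasGradientAt f f'x x) (hg : HasGradientAt g g' x) :
    HasGradientAt (fun y => f y + g y) (f'x + g') x := by
  rw [hasGradientAt_iff_hasFDerivAt, map_add]
  exact hf.hasFDerivAt.add hg.hasFDerivAt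

theorem HasGradientAt.sub (hf : HasGradientAt f f'x x) (hg : HasGradientAt g g' x) :
    HasGradientAt (fun y => f y - g y) (f'x - g') x := by
  rw [hasGradientAt_iff_hasFDerivAt, map_sub]
  exact hf.hasFDerivAt.sub hg.hasFDerivAt

theorem ConvexOn.inner_gradient_sub_nonneg (hf : ConvexOn ℝ s f) (hx : x ∈ s) (hy : y ∈ s)
    (hfx : HasGradientAt f f'x x) (hfy : HasGradientAt f f'y y) :
    0 ≤ ⟪f'x - f'y, x - y⟫_ℝ := by
  have hxy := hf.apply_sub_le_sub_of_hasFDerivAt hx hy hfx.hasFDerivAt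
  have hyx := hf.apply_sub_le_sub_of_hasFDerivAt hy hx hfy.hasFDerivAt
  simp only [toDual_apply_apply] at hxy hyx
  rw [← neg_sub x y, inner_neg_right] at hxy
  rw [inner_sub_left]
  linarith

theorem hasGradientAt_half_mul_norm_sq (m : ℝ) (x : E) :
    HasGradientAt (fun y => m / 2 * ‖y‖ ^ 2) (m • x) x := by
  rw [hasGradientAt_iff_hasFDerivAt]
  refine ((hasStrictFDerivAt_norm_sq x).hasFDerivAt.const_smul (m / 2)).congr_fderiv ?_
  ext v
  simp only [smul_apply, coe_innerSL_apply, nsmul_eq_mul, Nat.cast_ofNat,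
    smul_eq_mul, map_smul, toDual_apply_apply]
  ring

theorem StrongConvexOn.mul_norm_sq_le_inner_gradient_sub (hf : StrongConvexOn s m f) (hx : x ∈ s)
    (hy : y ∈ s) (hfx : HasGradientAt f f'x x) (hfy : HasGradientAt f f'y y) :
    m * ‖x - y‖ ^ 2 ≤ ⟪f'x - f'y, x - y⟫_ℝ := by
  have hmono := (strongConvexOn_iff_convex.mp hf).inner_gradient_sub_nonneg hx hy
    (hfx.sub (hasGradientAt_half_mul_norm_sq m x)) (hfy.sub (hasGradientAt_half_mul_norm_sq m y))
  have hsplit : f'x - m • x - (f'y - m • y) = (f'x - f'y) - m • (x - y) := by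
    rw [smul_sub]; abel
  rwa [hsplit, inner_sub_left, real_inner_smul_left, real_inner_self_eq_norm_sq, sub_nonneg] at hmono

theorem StrongConvexOn.mul_norm_sub_le_norm_gradient_sub (hf : StrongConvexOn s m f) (hx : x ∈ s)
    (hy : y ∈ s) (hfx : HasGradientAt f f'x x) (hfy : HasGradientAt f f'y y) :
    m * ‖x - y‖ ≤ ‖f'x - f'y‖ := by
  rcases (norm_nonneg (x - y)).eq_or_lt with hxy | hxy
  · simp [← hxy]
  · refine le_of_mul_le_mul_right ?_ hxy
    calc m * ‖x - y‖ * ‖x - y‖ = m * ‖x - y‖ ^ 2 := by ring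
      _ ≤ ⟪f'x - f'y, x - y⟫_ℝ := hf.mul_norm_sq_le_inner_gradient_sub hx hy hfx hfy
      _ ≤ ‖f'x - f'y‖ * ‖x - y‖ := real_inner_le_norm _ _

end Gradient

theorem local_minimizer_distance_bound_general
    (d : ℕ)
    (R φk : EuclideanSpace ℝ (Fin d) → ℝ)
    (gF gR gφ : EuclideanSpace ℝ (Fin d) → EuclideanSpace ℝ (Fin d))
    (μk Lk L : ℝ) (hμk : 0 < μk)
    (hRgrad : ∀ x, HasGradientAt R (gR x) x)
    (hφgrad : ∀ x, HasGradientAt φk (gφ x) x)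
    (hsc : StrongConvexOn Set.univ μk (fun w => φk w + R w))
    (hφlip : ∀ x y, ‖gφ x - gφ y‖ ≤ Lk * ‖x - y‖)
    (hFlip : ∀ x y, ‖gF x - gF y‖ ≤ L * ‖x - y‖)
    (wstar : EuclideanSpace ℝ (Fin d))
    (hwopt : gF wstar + gR wstar = 0)
    (wk : EuclideanSpace ℝ (Fin d) → EuclideanSpace ℝ (Fin d))
    -- first-order optimality of `w_k*(a)` for `P_k(·;a)`
    (hwkopt : ∀ a, gφ (wk a) + (gF a - gφ a) + gR (wk a) = 0)
    (a : EuclideanSpace ℝ (Fin d)) :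
    ‖wstar - wk a‖ ≤ (Lk + L) / μk * ‖a - wstar‖ := by
  have hgrad x : HasGradientAt (fun w => φk w + R w) (gφ x + gR x) x :=
    (hφgrad x).add (hRgrad x)
  have hdiff : gφ wstar + gR wstar - (gφ (wk a) + gR (wk a))
      = (gφ wstar - gφ a) - (gF wstar - gF a) := by
    linear_combination (norm := module) hwopt - hwkopt a
  rw [div_mul_eq_mul_div, le_div_iff₀ hμk, mul_comm]
  calc μk * ‖wstar - wk a‖
      ≤ ‖gφ wstar + gR wstar - (gφ (wk a) + gR (wk a))‖ :=
        hsc.mul_norm_sub_le_norm_gradient_sub (mem_univ _) (mem_univ _) (hgrad _) (hgrad _)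
    _ ≤ ‖gφ wstar - gφ a‖ + ‖gF wstar - gF a‖ := hdiff ▸ norm_sub_le _ _
    _ ≤ Lk * ‖wstar - a‖ + L * ‖wstar - a‖ := add_le_add (hφlip _ _) (hFlip _ _)
    _ = (Lk + L) * ‖a - wstar‖ := by rw [norm_sub_rev]; ring

/-- Smooth regularizer case: the local minimizers satisfy
`‖w* - w_k*(a)‖ ≤ ((L_k + L)/μ_k)‖a - w*‖`. -/
theorem local_minimizer_distance_bound
    (d : ℕ)
    (F R φk : EuclideanSpace ℝ (Fin d) → ℝ)
    (gF gR gφ : EuclideanSpace ℝ (Fin d) → EuclideanSpace ℝ (Fin d))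
    (μk Lk L : ℝ) (hμk : 0 < μk) (hLk : 0 ≤ Lk) (hL : 0 ≤ L)
    (hFgrad : ∀ x, HasGradientAt F (gF x) x)
    (hRgrad : ∀ x, HasGradientAt R (gR x) x)
    (hφgrad : ∀ x, HasGradientAt φk (gφ x) x)
    (hR : ConvexOn ℝ Set.univ R)
    (hsc : StrongConvexOn Set.univ μk (fun w => φk w + R w))
    (hφlip : ∀ x y, ‖gφ x - gφ y‖ ≤ Lk * ‖x - y‖)
    (hFlip : ∀ x y, ‖gF x - gF y‖ ≤ L * ‖x - y‖)
    (wstar : EuclideanSpace ℝ (Fin d))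
    (hwopt : gF wstar + gR wstar = 0)
    (wk : EuclideanSpace ℝ (Fin d) → EuclideanSpace ℝ (Fin d))
    -- first-order optimality of `w_k*(a)` for `P_k(·;a)`
    (hwkopt : ∀ a, gφ (wk a) + (gF a - gφ a) + gR (wk a) = 0)
    (a : EuclideanSpace ℝ (Fin d)) :
    ‖wstar - wk a‖ ≤ (Lk + L) / μk * ‖a - wstar‖ :=
  local_minimizer_distance_bound_general d R φk gF gR gφ μk Lk L hμk hRgrad hφgrad hsc hφlip hFlip
    wstar hwopt wk hwkopt a
end

section
/- One-step contraction for proximal VR step: let φ be μ-strongly convex and L-smooth, R convex, Q(w) = φ(w) + R(w) with minimizer w★. Suppose v is a random vector with E[v | u] = ∇φ(u), and set u⁺ = prox_{R,η}(u - ηv) with 0 < η ≤ 1/L. Then E‖u⁺ - w★‖² ≤ (1 - μη)‖u - w★‖² + 2η²E‖v - ∇φ(u)‖² + 2η(Q(w★) - E Q(u⁺)). -/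
/-!
Write `x_i = u - η v_i`, `p_i = prox(x_i)`, `Δ_i = v_i - ∇φ(u)`. The optimality condition of the
prox, `⟪x_i - p_i, w★ - p_i⟫ ≤ η (R w★ - R p_i)`, combined with strong convexity of `φ` at
`(u, w★)`, smoothness at `(u, p_i)` and `Lη ≤ 1`, gives for each sample
`‖p_i - w★‖² ≤ (1 - μη)‖u - w★‖² + 2η⟪Δ_i, w★ - p_i⟫ + 2η(Q w★ - Q p_i)`.
The cross terms are controlled on average: since `∑ Δ_i = 0`, symmetrizing over pairs turns
`-∑ ⟪Δ_i, p_i⟫` into `-(1/2n) ∑_{i,j} ⟪Δ_i - Δ_j, p_i - p_j⟫`, and nonexpansiveness of the prox,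
`‖p_i - p_j‖ ≤ η ‖Δ_i - Δ_j‖`, bounds this by `η ∑ ‖Δ_i‖²`. The symmetrization involves only
the points `p_i` themselves, so no comparison with the deterministic step `prox(u - η∇φ(u))`
is needed.
-/
open scoped RealInnerProductSpace
open Finset Filter Topology Set

theorem nonneg_of_forall_mem_Ioc_nonneg_add_mul {a b : ℝ}
    (h : ∀ t ∈ Ioc (0 : ℝ) 1, 0 ≤ a + t * b) : 0 ≤ a := by
  have hlim : Tendsto (fun t : ℝ => a + t * b) (𝓝[>] 0) (𝓝 a) := by
    refine tendsto_nhdsWithin_of_tendsto_nhds ?_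
    simpa using tendsto_const_nhds.add ((tendsto_id (x := 𝓝 (0 : ℝ))).mul_const b)
  refine ge_of_tendsto hlim ?_
  filter_upwards [Ioc_mem_nhdsGT (zero_lt_one' ℝ)] with t ht using h t ht

theorem sum_sum_inner_sub_sub {ι E : Type*} [Fintype ι] [NormedAddCommGroup E]
    [InnerProductSpace ℝ E] (a b : ι → E) :
    ∑ i, ∑ j, ⟪a i - a j, b i - b j⟫ =
      2 * Fintype.card ι * ∑ i, ⟪a i, b i⟫ - 2 * ⟪∑ i, a i, ∑ i, b i⟫ := by
  simp only [inner_sub_left, inner_sub_right, sum_sub_distrib, sum_inner, inner_sum,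
    sum_const, card_univ, nsmul_eq_mul, ← mul_sum]
  rw [sum_comm (f := fun i j => ⟪a j, b i⟫)]
  ring

theorem sum_inner_sub_le_of_sum_eq_zero {ι E : Type*} [Fintype ι] [NormedAddCommGroup E]
    [InnerProductSpace ℝ E] {Δ q : ι → E} {η : ℝ} (hΔ : ∑ i, Δ i = 0)
    (hq : ∀ i j, ‖q i - q j‖ ≤ η * ‖Δ i - Δ j‖) (w : E) :
    ∑ i, ⟪Δ i, w - q i⟫ ≤ η * ∑ i, ‖Δ i‖ ^ 2 := by
  rcases isEmpty_or_nonempty ι with hι | hι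
  · simp
  have hcross : ∀ i j, -(η * ‖Δ i - Δ j‖ ^ 2) ≤ ⟪Δ i - Δ j, q i - q j⟫ := fun i j =>
    calc -(η * ‖Δ i - Δ j‖ ^ 2) = -(‖Δ i - Δ j‖ * (η * ‖Δ i - Δ j‖)) := by ring
      _ ≤ -(‖Δ i - Δ j‖ * ‖q i - q j‖) := by gcongr; exact hq i j
      _ ≤ ⟪Δ i - Δ j, q i - q j⟫ := neg_le_of_abs_le (abs_real_inner_le_norm _ _)
  have hsum : ∑ i, ∑ j, -(η * ‖Δ i - Δ j‖ ^ 2) ≤ ∑ i, ∑ j, ⟪Δ i - Δ j, q i - q j⟫ :=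
    sum_le_sum fun i _ => sum_le_sum fun j _ => hcross i j
  have hsq : ∑ i, ∑ j, ‖Δ i - Δ j‖ ^ 2 = 2 * Fintype.card ι * ∑ i, ‖Δ i‖ ^ 2 := by
    simp_rw [← real_inner_self_eq_norm_sq]
    rw [sum_sum_inner_sub_sub, hΔ, inner_zero_left, mul_zero, sub_zero]
  rw [sum_sum_inner_sub_sub, hΔ, inner_zero_left, mul_zero, sub_zero] at hsum
  simp only [sum_neg_distrib, ← mul_sum, hsq] at hsum
  have hcard : (0 : ℝ) < Fintype.card ι := by exact_mod_cast Fintype.card_pos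
  simp only [inner_sub_right, sum_sub_distrib, ← sum_inner, hΔ, inner_zero_left, zero_sub]
  nlinarith

section Prox

variable {E : Type*} [NormedAddCommGroup E] [InnerProductSpace ℝ E]

def IsProxPoint (R : E → ℝ) (η : ℝ) (x p : E) : Prop :=
  IsMinOn (fun z => R z + 1 / (2 * η) * ‖z - x‖ ^ 2) univ p

variable {R : E → ℝ} {η : ℝ} {x y p q : E}

theorem IsProxPoint.inner_sub_le (hR : ConvexOn ℝ univ R) (hη : 0 < η)
    (hp : IsProxPoint R η x p) (z : E) : ⟪x - p, z - p⟫ ≤ η * (R z - R p) := by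
  suffices 0 ≤ (R z - R p - ⟪x - p, z - p⟫ / η) by
    rw [sub_div' hη.ne', le_div_iff₀ hη] at this
    linarith
  refine nonneg_of_forall_mem_Ioc_nonneg_add_mul (b := ‖z - p‖ ^ 2 / (2 * η)) ?_
  rintro t ⟨ht0, ht1⟩
  have hmin : R p + 1 / (2 * η) * ‖p - x‖ ^ 2
      ≤ R (p + t • (z - p)) + 1 / (2 * η) * ‖p + t • (z - p) - x‖ ^ 2 := hp (mem_univ _)
  have hconv : R (p + t • (z - p)) ≤ (1 - t) * R p + t * R z := by
    have := hR.2 (mem_univ p) (mem_univ z) (sub_nonneg.2 ht1) ht0.le (by ring)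
    rwa [show (1 - t) • p + t • z = p + t • (z - p) by module, smul_eq_mul, smul_eq_mul] at this
  have hnorm : ‖p + t • (z - p) - x‖ ^ 2
      = ‖p - x‖ ^ 2 - 2 * t * ⟪x - p, z - p⟫ + t ^ 2 * ‖z - p‖ ^ 2 := by
    rw [show p + t • (z - p) - x = t • (z - p) - (x - p) by abel, norm_sub_sq_real,
      norm_smul, real_inner_smul_left, mul_pow, Real.norm_eq_abs, sq_abs, norm_sub_rev p x,
      real_inner_comm]
    ring
  rw [hnorm] at hmin
  refine nonneg_of_mul_nonneg_right ?_ ht0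
  linear_combination hmin + hconv

theorem IsProxPoint.norm_sub_sq_le_inner (hR : ConvexOn ℝ univ R) (hη : 0 < η)
    (hp : IsProxPoint R η x p) (hq : IsProxPoint R η y q) :
    ‖p - q‖ ^ 2 ≤ ⟪x - y, p - q⟫ := by
  have hpq := hp.inner_sub_le hR hη q
  have hqp := hq.inner_sub_le hR hη p
  rw [← neg_sub p q, inner_neg_right] at hpq
  rw [← real_inner_self_eq_norm_sq]
  have : ⟪x - y, p - q⟫ - ⟪p - q, p - q⟫ = ⟪x - p, p - q⟫ - ⟪y - q, p - q⟫ := by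
    rw [← inner_sub_left, ← inner_sub_left]; congr 1; abel
  linarith

theorem IsProxPoint.norm_sub_le (hR : ConvexOn ℝ univ R) (hη : 0 < η)
    (hp : IsProxPoint R η x p) (hq : IsProxPoint R η y q) : ‖p - q‖ ≤ ‖x - y‖ := by
  have := (hp.norm_sub_sq_le_inner hR hη hq).trans (real_inner_le_norm _ _)
  nlinarith [norm_nonneg (p - q), norm_nonneg (x - y)]

theorem IsProxPoint.norm_sub_le_mul_norm_sub (hR : ConvexOn ℝ univ R) (hη : 0 < η) {v v' : E}
    (hp : IsProxPoint R η (x - η • v) p) (hq : IsProxPoint R η (x - η • v') q) :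
    ‖p - q‖ ≤ η * ‖v - v'‖ := by
  have := hp.norm_sub_le hR hη hq
  rwa [sub_sub_sub_cancel_left, ← smul_sub, norm_smul, Real.norm_of_nonneg hη.le,
    norm_sub_rev v'] at this

theorem IsProxPoint.norm_sub_sq_le_of_gradient_step {φ : E → ℝ} {g u v w : E} {μ L : ℝ}
    (hR : ConvexOn ℝ univ R) (hη : 0 < η) (hLη : L * η ≤ 1)
    (hsc : φ w ≥ φ u + ⟪g, w - u⟫ + μ / 2 * ‖u - w‖ ^ 2)
    (hsmooth : φ p ≤ φ u + ⟪g, p - u⟫ + L / 2 * ‖u - p‖ ^ 2)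
    (hp : IsProxPoint R η (u - η • v) p) :
    ‖p - w‖ ^ 2 ≤ (1 - μ * η) * ‖u - w‖ ^ 2 + 2 * η * ⟪v - g, w - p⟫
      + 2 * η * (φ w + R w - (φ p + R p)) := by
  have hsplit : ⟪u - η • v - p, w - p⟫
      = ⟪u - p, w - p⟫ - η * (⟪v - g, w - p⟫ + ⟪g, w - u⟫ - ⟪g, p - u⟫) := by
    simp only [inner_sub_left, inner_sub_right, real_inner_smul_left]
    ring
  have hpolar : 2 * ⟪u - p, w - p⟫ = ‖u - p‖ ^ 2 + ‖p - w‖ ^ 2 - ‖u - w‖ ^ 2 := by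
    have := norm_sub_sq_real (u - p) (w - p)
    rw [sub_sub_sub_cancel_right, norm_sub_rev w p] at this
    linarith
  have hopt := hp.inner_sub_le hR hη w
  rw [hsplit] at hopt
  have hdrop : 0 ≤ (1 - L * η) * ‖u - p‖ ^ 2 := mul_nonneg (sub_nonneg.2 hLη) (sq_nonneg _)
  linear_combination 2 * hopt - hpolar + 2 * η * hsc + 2 * η * hsmooth + hdrop

end Prox

theorem prox_vr_one_step_contraction_general
    (d n : ℕ) (hn : 0 < n)
    (φ R : EuclideanSpace ℝ (Fin d) → ℝ)
    (gφ : EuclideanSpace ℝ (Fin d) → EuclideanSpace ℝ (Fin d))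
    (μ L η : ℝ) (hη : 0 < η) (hηL : η ≤ 1 / L)
    (hsc : ∀ a b, φ b ≥ φ a + inner ℝ (gφ a) (b - a) + μ / 2 * ‖a - b‖ ^ 2)
    (hsmooth : ∀ a b, φ b ≤ φ a + inner ℝ (gφ a) (b - a) + L / 2 * ‖a - b‖ ^ 2)
    (hR : ConvexOn ℝ Set.univ R)
    (wstar : EuclideanSpace ℝ (Fin d))
    (u : EuclideanSpace ℝ (Fin d))
    (v : Fin n → EuclideanSpace ℝ (Fin d))
    (hv : (1 / (n : ℝ)) • ∑ i, v i = gφ u)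
    (uplus : Fin n → EuclideanSpace ℝ (Fin d))
    (huplus : ∀ i, IsMinOn
      (fun z => R z + 1 / (2 * η) * ‖z - (u - η • v i)‖ ^ 2) Set.univ (uplus i)) :
    (1 / (n : ℝ)) * ∑ i, ‖uplus i - wstar‖ ^ 2
      ≤ (1 - μ * η) * ‖u - wstar‖ ^ 2
        + 2 * η ^ 2 * ((1 / (n : ℝ)) * ∑ i, ‖v i - gφ u‖ ^ 2)
        + 2 * η * ((φ wstar + R wstar) -
            (1 / (n : ℝ)) * ∑ i, (φ (uplus i) + R (uplus i))) := by
  have hn' : (0 : ℝ) < n := Nat.cast_pos.2 hn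
  have hL : 0 < L := one_div_pos.1 (hη.trans_le hηL)
  have hLη : L * η ≤ 1 := by rwa [le_div_iff₀ hL, mul_comm] at hηL
  have hmean : ∑ i, (v i - gφ u) = 0 := by
    rw [sum_sub_distrib, sum_const, card_univ, Fintype.card_fin, ← hv,
      ← Nat.cast_smul_eq_nsmul ℝ, smul_smul, mul_one_div_cancel hn'.ne', one_smul, sub_self]
  have hprox : ∀ i, IsProxPoint R η (u - η • v i) (uplus i) := huplus
  have hstep i := (hprox i).norm_sub_sq_le_of_gradient_step hR hη hLη (hsc u wstar)
    (hsmooth u (uplus i))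
  have hnoise : ∑ i, ⟪v i - gφ u, wstar - uplus i⟫ ≤ η * ∑ i, ‖v i - gφ u‖ ^ 2 := by
    refine sum_inner_sub_le_of_sum_eq_zero hmean (fun i j => ?_) wstar
    rw [sub_sub_sub_cancel_right]
    exact (hprox i).norm_sub_le_mul_norm_sub hR hη (hprox j)
  calc (1 / (n : ℝ)) * ∑ i, ‖uplus i - wstar‖ ^ 2
      ≤ (1 / (n : ℝ)) * ∑ i, ((1 - μ * η) * ‖u - wstar‖ ^ 2
          + 2 * η * ⟪v i - gφ u, wstar - uplus i⟫
          + 2 * η * (φ wstar + R wstar - (φ (uplus i) + R (uplus i)))) := by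
        gcongr with i
        exact hstep i
    _ = (1 - μ * η) * ‖u - wstar‖ ^ 2
          + 2 * η * ((1 / (n : ℝ)) * ∑ i, ⟪v i - gφ u, wstar - uplus i⟫)
          + 2 * η * ((φ wstar + R wstar) - (1 / (n : ℝ)) * ∑ i, (φ (uplus i) + R (uplus i))) := by
        simp only [sum_add_distrib, sum_sub_distrib, ← mul_sum, sum_const, card_univ,
          Fintype.card_fin, nsmul_eq_mul]
        field_simp
    _ ≤ (1 - μ * η) * ‖u - wstar‖ ^ 2
          + 2 * η * ((1 / (n : ℝ)) * (η * ∑ i, ‖v i - gφ u‖ ^ 2))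
          + 2 * η * ((φ wstar + R wstar) - (1 / (n : ℝ)) * ∑ i, (φ (uplus i) + R (uplus i))) := by
        gcongr _ + 2 * η * (_ * ?_) + _
    _ = _ := by ring

/-- One-step contraction for the proximal variance-reduced step: with
`E[v] = ∇φ(u)` (expectation over a uniform finite sample) and
`u⁺ = prox_{R,η}(u - ηv)` for `0 < η ≤ 1/L`,
`E‖u⁺ - w★‖² ≤ (1-μη)‖u - w★‖² + 2η²E‖v - ∇φ(u)‖² + 2η(Q(w★) - E Q(u⁺))`. -/
theorem prox_vr_one_step_contraction
    (d n : ℕ) (hn : 0 < n)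
    (φ R : EuclideanSpace ℝ (Fin d) → ℝ)
    (gφ : EuclideanSpace ℝ (Fin d) → EuclideanSpace ℝ (Fin d))
    (μ L η : ℝ) (hμ : 0 < μ) (hη : 0 < η) (hηL : η ≤ 1 / L) (hL : 0 < L)
    (hgrad : ∀ x, HasGradientAt φ (gφ x) x)
    (hsc : ∀ a b, φ b ≥ φ a + inner ℝ (gφ a) (b - a) + μ / 2 * ‖a - b‖ ^ 2)
    (hsmooth : ∀ a b, φ b ≤ φ a + inner ℝ (gφ a) (b - a) + L / 2 * ‖a - b‖ ^ 2)
    (hR : ConvexOn ℝ Set.univ R)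
    (wstar : EuclideanSpace ℝ (Fin d))
    (hwstar : IsMinOn (fun w => φ w + R w) Set.univ wstar)
    (u : EuclideanSpace ℝ (Fin d))
    (v : Fin n → EuclideanSpace ℝ (Fin d))
    (hv : (1 / (n : ℝ)) • ∑ i, v i = gφ u)
    (uplus : Fin n → EuclideanSpace ℝ (Fin d))
    (huplus : ∀ i, IsMinOn
      (fun z => R z + 1 / (2 * η) * ‖z - (u - η • v i)‖ ^ 2) Set.univ (uplus i)) :
    (1 / (n : ℝ)) * ∑ i, ‖uplus i - wstar‖ ^ 2
      ≤ (1 - μ * η) * ‖u - wstar‖ ^ 2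
        + 2 * η ^ 2 * ((1 / (n : ℝ)) * ∑ i, ‖v i - gφ u‖ ^ 2)
        + 2 * η * ((φ wstar + R wstar) -
            (1 / (n : ℝ)) * ∑ i, (φ (uplus i) + R (uplus i))) :=
  prox_vr_one_step_contraction_general d n hn φ R gφ μ L η hη hηL hsc hsmooth hR wstar u v hv uplus
    huplus
end

section
/- Define α₀ = 0 and α_q = (∑_{i=1}^q (1-λ₁η)^{i-1})/(1-λ₁η)^q for q ≥ 1, where 0 < λ₁η < 1. Suppose |z| < λ₂ and u₀ > 0, and define the sequence u_{m+1} = S((1-λ₁η)u_m - ηz) where S is soft-thresholding at level λ₂η (S(d) = d - λ₂η if d ≥ λ₂η, 0 if |d| < λ₂η, d + λ₂η if d ≤ -λ₂η). Let q₀ satisfy α_{q₀}η(z+λ₂) ≤ u₀ < α_{q₀+1}η(z+λ₂). Then for 0 ≤ m ≤ q₀, u_m = (1-λ₁η)^m [u₀ - α_m η(z+λ₂)], and for all m > q₀, u_m = 0. -/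
/-!
While the argument stays above the threshold, the recursion is the affine map
`x ↦ β x - η (z + λ₂)` with `β = 1 - λ₁η`, whose iterates are `β^m (u₀ - α_m η (z + λ₂))`
because `β^m α_m` is the geometric sum `∑_{i<m} β^i`. The left inequality on `q₀` makes the
`q₀`-th iterate nonnegative, hence all earlier ones too: a nonnegative image of
`x ↦ β x - c` has a positive preimage. The right inequality sends the next argument into the
dead zone `(-λ₂η, λ₂η)`, and since `|ηz| < λ₂η`, the value `0` is then a fixed point.
-/

open Finset

noncomputable def softThreshold (t x : ℝ) : ℝ :=
  if t ≤ x then x - t else if x ≤ -t then x + t else 0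

lemma softThreshold_of_le {t x : ℝ} (h : t ≤ x) : softThreshold t x = x - t :=
  if_pos h

lemma softThreshold_of_abs_lt {t x : ℝ} (h : |x| < t) : softThreshold t x = 0 := by
  obtain ⟨hlow, hup⟩ := abs_lt.1 h
  rw [softThreshold, if_neg hup.not_ge, if_neg hlow.not_ge]

lemma pow_mul_eq_geom_sum {K : Type*} [Field K] {β : K} (hβ : β ≠ 0) {α : ℕ → K}
    (hα0 : α 0 = 0) (hα : ∀ q : ℕ, 1 ≤ q → α q = (∑ i ∈ range q, β ^ i) / β ^ q) (m : ℕ) :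
    β ^ m * α m = ∑ i ∈ range m, β ^ i := by
  rcases m.eq_zero_or_pos with rfl | hm
  · simp [hα0]
  · rw [hα m hm, mul_div_cancel₀ _ (pow_ne_zero m hβ)]

lemma nonneg_of_le_of_affine_succ {β c : ℝ} {w : ℕ → ℝ} (hβ : 0 < β) (hc : 0 ≤ c)
    (hw : ∀ m, w (m + 1) = β * w m - c) {q : ℕ} (hq : 0 ≤ w q) {m : ℕ} (hm : m ≤ q) :
    0 ≤ w m := by
  induction hm using Nat.decreasingInduction with
  | self => exact hq
  | of_succ k _ ih => exact nonneg_of_mul_nonneg_right (by linarith [hw k]) hβ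

section Iteration

variable {β a t : ℝ} {u : ℕ → ℝ}

lemma softThreshold_iterate_eq_affine_of_le
    (hu : ∀ m, u (m + 1) = softThreshold t (β * u m - a)) (hβ : 0 < β) (hat : 0 ≤ a + t)
    {w : ℕ → ℝ} (hw : ∀ m, w (m + 1) = β * w m - (a + t)) (h0 : u 0 = w 0)
    {q : ℕ} (hq : 0 ≤ w q) :
    ∀ m ≤ q, u m = w m := by
  intro m hm
  induction m with
  | zero => exact h0
  | succ k ih =>
    have hwk : 0 ≤ w (k + 1) := nonneg_of_le_of_affine_succ hβ hat hw hq hm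
    rw [hu, ih (by omega), softThreshold_of_le (by linarith [hw k]), hw]
    ring

lemma softThreshold_iterate_eq_zero_of_lt
    (hu : ∀ m, u (m + 1) = softThreshold t (β * u m - a)) (hβ : 0 ≤ β) (ha : |a| < t)
    {q : ℕ} (hq : 0 ≤ u q) (hqt : β * u q - a < t) : ∀ m, q < m → u m = 0 := by
  have hdead : ∀ x, 0 ≤ x → β * x - a < t → softThreshold t (β * x - a) = 0 := fun x hx hxt =>
    softThreshold_of_abs_lt <| abs_lt.2
      ⟨by linarith [mul_nonneg hβ hx, (abs_lt.1 ha).2], hxt⟩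
  intro m hm
  induction m, hm using Nat.le_induction with
  | base => rw [hu, hdead _ hq hqt]
  | succ k _ ih => rw [hu, ih, hdead 0 le_rfl (by linarith [(abs_lt.1 ha).1])]

end Iteration

theorem recovery_rule_case_1a_general
    (lam1 lam2 η z : ℝ)
    (hη : 0 < η)
    (hle1 : lam1 * η < 1) (hz : |z| < lam2)
    (S : ℝ → ℝ)
    (hS : ∀ x, S x = if lam2 * η ≤ x then x - lam2 * η
                     else if x ≤ -(lam2 * η) then x + lam2 * η else 0)
    (α : ℕ → ℝ) (hα0 : α 0 = 0)
    (hα : ∀ q : ℕ, 1 ≤ q →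
      α q = (∑ i ∈ Finset.range q, (1 - lam1 * η) ^ i) / (1 - lam1 * η) ^ q)
    (u : ℕ → ℝ)
    (hrec : ∀ m : ℕ, u (m + 1) = S ((1 - lam1 * η) * u m - η * z))
    (q0 : ℕ)
    (hq0l : α q0 * (η * (z + lam2)) ≤ u 0)
    (hq0r : u 0 < α (q0 + 1) * (η * (z + lam2))) :
    (∀ m ≤ q0, u m = (1 - lam1 * η) ^ m * (u 0 - α m * (η * (z + lam2)))) ∧
    (∀ m, q0 < m → u m = 0) := by
  set β := 1 - lam1 * η
  set c := η * (z + lam2)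
  obtain rfl : S = softThreshold (lam2 * η) := funext hS
  have hβ : 0 < β := sub_pos.2 hle1
  have hzη : |η * z| < lam2 * η := by
    rw [abs_mul, abs_of_pos hη, mul_comm lam2]
    exact mul_lt_mul_of_pos_left hz hη
  set w : ℕ → ℝ := fun m => β ^ m * (u 0 - α m * c) with hw_def
  have hw : ∀ m, w (m + 1) = β * w m - (η * z + lam2 * η) := fun m => by
    have hgeom := pow_mul_eq_geom_sum hβ.ne' hα0 hα
    simp only [hw_def]
    linear_combination
      (-c) * hgeom (m + 1) + (c * β) * hgeom m - c * geom_sum_succ (x := β) (n := m)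
  have hwq : 0 ≤ w q0 := mul_nonneg (pow_pos hβ _).le (sub_nonneg.2 hq0l)
  have hwq_succ : w (q0 + 1) < 0 := mul_neg_of_pos_of_neg (pow_pos hβ _) (sub_neg.2 hq0r)
  have hactive : ∀ m ≤ q0, u m = w m :=
    softThreshold_iterate_eq_affine_of_le hrec hβ (by linarith [(abs_lt.1 hzη).1]) hw
      (by simp [w, hα0]) hwq
  refine ⟨hactive, softThreshold_iterate_eq_zero_of_lt hrec hβ.le hzη ?_ ?_⟩
  · rwa [hactive q0 le_rfl]
  · rw [hactive q0 le_rfl]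
    linarith [hw q0]

/-- pSCOPE recovery rule, case 1(a): skipped-coordinate recursion under
soft-thresholding with `|z| < λ₂` and `u₀ > 0`. -/
theorem recovery_rule_case_1a
    (lam1 lam2 η z : ℝ)
    (hlam1 : 0 < lam1) (hlam2 : 0 < lam2) (hη : 0 < η)
    (hle1 : lam1 * η < 1) (hz : |z| < lam2)
    (S : ℝ → ℝ)
    (hS : ∀ x, S x = if lam2 * η ≤ x then x - lam2 * η
                     else if x ≤ -(lam2 * η) then x + lam2 * η else 0)
    (α : ℕ → ℝ) (hα0 : α 0 = 0)
    (hα : ∀ q : ℕ, 1 ≤ q →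
      α q = (∑ i ∈ Finset.range q, (1 - lam1 * η) ^ i) / (1 - lam1 * η) ^ q)
    (u : ℕ → ℝ) (hu0 : 0 < u 0)
    (hrec : ∀ m : ℕ, u (m + 1) = S ((1 - lam1 * η) * u m - η * z))
    (q0 : ℕ)
    (hq0l : α q0 * (η * (z + lam2)) ≤ u 0)
    (hq0r : u 0 < α (q0 + 1) * (η * (z + lam2))) :
    (∀ m ≤ q0, u m = (1 - lam1 * η) ^ m * (u 0 - α m * (η * (z + lam2)))) ∧
    (∀ m, q0 < m → u m = 0) :=
  recovery_rule_case_1a_general lam1 lam2 η z hη hle1 hz S hS α hα0 hα u hrec q0 hq0l hq0r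
end

section
/- Recovery rule, drift case: with S the soft-thresholding operator at level λ₂η and u_{m+1} = S((1-λ₁η)u_m - ηz), if z > λ₂ and u₀ ≤ 0, then for all m ≥ 0, u_m = (1-λ₁η)^m u₀ - η(z-λ₂)β_m, where β_m = ∑_{i=1}^m (1-λ₁η)^{i-1} (β₀ = 0). -/
/-- pSCOPE recovery rule, drift case: if `z > λ₂` and `u₀ ≤ 0`, then
`u_m = (1-λ₁η)^m u₀ - η(z-λ₂)β_m` with `β_m = ∑_{i=1}^m (1-λ₁η)^{i-1}`. -/
theorem recovery_rule_drift_case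
    (lam1 lam2 η z : ℝ)
    (hlam1 : 0 < lam1) (hlam2 : 0 < lam2) (hη : 0 < η)
    (hle1 : lam1 * η < 1) (hz : lam2 < z)
    (S : ℝ → ℝ)
    (hS : ∀ x, S x = if lam2 * η ≤ x then x - lam2 * η
                     else if x ≤ -(lam2 * η) then x + lam2 * η else 0)
    (β : ℕ → ℝ) (hβ : ∀ m : ℕ, β m = ∑ i ∈ Finset.range m, (1 - lam1 * η) ^ i)
    (u : ℕ → ℝ) (hu0 : u 0 ≤ 0)
    (hrec : ∀ m : ℕ, u (m + 1) = S ((1 - lam1 * η) * u m - η * z)) :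
    ∀ m : ℕ, u m = (1 - lam1 * η) ^ m * u 0 - η * (z - lam2) * β m := by
  have ha : (0:ℝ) < 1 - lam1 * η := by linarith
  have key : ∀ m : ℕ, u m = (1 - lam1 * η) ^ m * u 0 - η * (z - lam2) * β m ∧ u m ≤ 0 := by
    intro m
    induction m with
    | zero =>
      constructor
      · simp [hβ 0]
      · exact hu0
    | succ n ih =>
      obtain ⟨hform, hneg⟩ := ih
      have harg : (1 - lam1 * η) * u n - η * z ≤ -(lam2 * η) := by
        nlinarith
      have hstep : u (n + 1) = (1 - lam1 * η) * u n - η * z + lam2 * η := by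
        rw [hrec n, hS]
        rw [if_neg (by nlinarith), if_pos harg]
      have hβs : β (n + 1) = 1 + (1 - lam1 * η) * β n := by
        rw [hβ, hβ, geom_sum_succ]
        ring
      have hform' : u (n + 1) = (1 - lam1 * η) ^ (n+1) * u 0 - η * (z - lam2) * β (n+1) := by
        rw [hstep, hform, hβs, pow_succ]; ring
      constructor
      · exact hform'
      · rw [hform']
        have h1 : (1 - lam1 * η) ^ (n+1) * u 0 ≤ 0 :=
          mul_nonpos_of_nonneg_of_nonpos (by positivity) hu0
        have h2 : 0 ≤ β (n+1) := by
          rw [hβ]; exact Finset.sum_nonneg fun i _ => by positivity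
        nlinarith
  exact fun m => (key m).1
end
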